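/- Let $d\geq 3$ be an integer and let $(M,g)$ be a Riemannian manifold of dimension $d$ admitting the $L^1$-Sobolev inequality: there is $D>0$ with $\left(\int_M h^{d/(d-1)}\right)^{(d-1)/d}\leq D\int_M|\nabla h|$ for all nonnegative compactly supported $C^1$ functions $h$ on $M$. Then the product $M'=M\times\mathbb{R}$ (with the product metric) satisfies the $L^1$-Sobolev inequality in dimension $d+1$: $\left(\int_{M'} h^{(d+1)/d}\right)^{d/(d+1)}\leq D^{d/(d+1)}\int_{M'}|\nabla_{M'} h|$ for all nonnegative compactly supported $C^1$ functions $h$ on $M'$. -/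

import Mathlib

open MeasureTheory ENNReal

/-!
Write `C = ∫ G` over the product. By the one-dimensional bound, every slice satisfies
`∫ h(·, s) ≤ C`. Hölder with exponents `p / (p - 1)` and `p`, applied to
`h ^ (1 + 1/p) = h · h ^ (1/p)`, together with the slice Sobolev inequality gives
`∫ h(·, s) ^ ((p + 1)/p) ≤ D (∫ G(·, s)) C ^ (1/p)`. Integrating in `s` yields
`∫ h ^ ((p + 1)/p) ≤ D C ^ ((p + 1)/p)`, and taking the `p/(p + 1)`-th power finishes.
-/

theorem lintegral_rpow_add_one_div_le {α : Type*} [MeasurableSpace α] (μ : Measure α)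
    {p : ℝ} (hp : 1 < p) {f : α → ℝ≥0∞} (hf : AEMeasurable f μ) :
    ∫⁻ x, f x ^ ((p + 1) / p) ∂μ
      ≤ (∫⁻ x, f x ^ (p / (p - 1)) ∂μ) ^ ((p - 1) / p) * (∫⁻ x, f x ∂μ) ^ (1 / p) := by
  have hp0 : 0 < p := zero_lt_one.trans hp
  have hpq : (p / (p - 1)).HolderConjugate p :=
    ((Real.holderConjugate_iff_eq_conjExponent hp).2 rfl).symm
  have hsplit : ∀ x, f x ^ ((p + 1) / p) = f x * f x ^ (1 / p) := fun x => by
    rw [show (p + 1) / p = 1 + 1 / p by field_simp,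
      ENNReal.rpow_add_of_nonneg _ _ zero_le_one (by positivity), ENNReal.rpow_one]
  have hpow : ∀ x, (f x ^ (1 / p)) ^ p = f x := fun x => by
    rw [← ENNReal.rpow_mul, one_div_mul_cancel hp0.ne', ENNReal.rpow_one]
  simpa only [Pi.mul_apply, hsplit, hpow, one_div_div] using
    ENNReal.lintegral_mul_le_Lp_mul_Lq μ hpq hf (hf.pow_const (1 / p))

theorem mul_rpow_add_one_div_rpow_div_add_one {p : ℝ} (hp : 0 < p) (D C : ℝ≥0∞) :
    (D * C ^ ((p + 1) / p)) ^ (p / (p + 1)) = D ^ (p / (p + 1)) * C := by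
  rw [ENNReal.mul_rpow_of_nonneg _ _ (by positivity), ← ENNReal.rpow_mul,
    show (p + 1) / p * (p / (p + 1)) = 1 by field_simp, ENNReal.rpow_one]

section SliceSobolev

variable {α β : Type*} [MeasurableSpace α] [MeasurableSpace β] {μ : Measure α} {ν : Measure β}
  [SFinite ν] {h G : α × β → ℝ≥0∞}

theorem lintegral_slice_le_lintegral_prod (hGm : Measurable G)
    (hftc : ∀ x s, h (x, s) ≤ ∫⁻ t, G (x, t) ∂ν) (s : β) :
    ∫⁻ x, h (x, s) ∂μ ≤ ∫⁻ z, G z ∂μ.prod ν :=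
  calc ∫⁻ x, h (x, s) ∂μ ≤ ∫⁻ x, ∫⁻ t, G (x, t) ∂ν ∂μ := lintegral_mono fun x => hftc x s
    _ = ∫⁻ z, G z ∂μ.prod ν := (lintegral_prod _ hGm.aemeasurable).symm

theorem lintegral_prod_rpow_add_one_div_le [SFinite μ] {p : ℝ} (hp : 1 < p) {D : ℝ≥0∞}
    (hm : Measurable h) (hGm : Measurable G)
    (hslice : ∀ s, (∫⁻ x, h (x, s) ^ (p / (p - 1)) ∂μ) ^ ((p - 1) / p)
      ≤ D * ∫⁻ x, G (x, s) ∂μ)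
    (hftc : ∀ x s, h (x, s) ≤ ∫⁻ t, G (x, t) ∂ν) :
    ∫⁻ z, h z ^ ((p + 1) / p) ∂μ.prod ν ≤ D * (∫⁻ z, G z ∂μ.prod ν) ^ ((p + 1) / p) := by
  set C := ∫⁻ z, G z ∂μ.prod ν with hC
  have hslice_rpow : ∀ s, ∫⁻ x, h (x, s) ^ ((p + 1) / p) ∂μ
      ≤ (D * ∫⁻ x, G (x, s) ∂μ) * C ^ (1 / p) := fun s =>
    (lintegral_rpow_add_one_div_le μ hp (hm.comp measurable_prodMk_right).aemeasurable).trans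
      (mul_le_mul' (hslice s) (ENNReal.rpow_le_rpow
        (lintegral_slice_le_lintegral_prod hGm hftc s) (by positivity)))
  calc ∫⁻ z, h z ^ ((p + 1) / p) ∂μ.prod ν
      = ∫⁻ s, ∫⁻ x, h (x, s) ^ ((p + 1) / p) ∂μ ∂ν :=
        lintegral_prod_symm _ (hm.pow_const _).aemeasurable
    _ ≤ ∫⁻ s, D * C ^ (1 / p) * ∫⁻ x, G (x, s) ∂μ ∂ν :=
        lintegral_mono fun s => (hslice_rpow s).trans_eq (by ring)
    _ = D * C ^ (1 / p) * C := by
        rw [lintegral_const_mul _ hGm.lintegral_prod_left',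
          hC, lintegral_prod_symm _ hGm.aemeasurable]
    _ = D * C ^ ((p + 1) / p) := by
        rw [mul_assoc, show (p + 1) / p = 1 / p + 1 by field_simp; ring,
          ENNReal.rpow_add_of_nonneg _ _ (by positivity) zero_le_one, ENNReal.rpow_one]

theorem lintegral_prod_sobolev_of_slice_sobolev [SFinite μ] {p : ℝ} (hp : 1 < p) {D : ℝ≥0∞}
    (hm : Measurable h) (hGm : Measurable G)
    (hslice : ∀ s, (∫⁻ x, h (x, s) ^ (p / (p - 1)) ∂μ) ^ ((p - 1) / p)
      ≤ D * ∫⁻ x, G (x, s) ∂μ)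
    (hftc : ∀ x s, h (x, s) ≤ ∫⁻ t, G (x, t) ∂ν) :
    (∫⁻ z, h z ^ ((p + 1) / p) ∂μ.prod ν) ^ (p / (p + 1))
      ≤ D ^ (p / (p + 1)) * ∫⁻ z, G z ∂μ.prod ν := by
  rw [← mul_rpow_add_one_div_rpow_div_add_one (zero_lt_one.trans hp)]
  exact ENNReal.rpow_le_rpow (lintegral_prod_rpow_add_one_div_le hp hm hGm hslice hftc)
    (by positivity)

end SliceSobolev

/-- the `L¹`-Sobolev inequality passes to the product with `ℝ`
(one dimension higher), in the abstract form with gradient modulus `G`: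
the hypotheses encode the slice Sobolev inequality (together with
`|∇_{M_s}h| ≤ |∇_{M'}h|`) and the fundamental-theorem-of-calculus bound
(together with `|∂_s h| ≤ |∇_{M'}h|`). -/
theorem stmt9 (M : Type*) [MeasurableSpace M] (μ : Measure M) [SigmaFinite μ]
    (d : ℕ) (hd : 3 ≤ d) (D : ℝ≥0∞)
    (h G : M × ℝ → ℝ≥0∞) (hm : Measurable h) (hGm : Measurable G)
    (hslice : ∀ s : ℝ,
      (∫⁻ x, h (x, s) ^ ((d : ℝ) / ((d : ℝ) - 1)) ∂μ) ^ (((d : ℝ) - 1) / d)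
        ≤ D * ∫⁻ x, G (x, s) ∂μ)
    (hftc : ∀ x s, h (x, s) ≤ ∫⁻ t, G (x, t)) :
    (∫⁻ p, h p ^ (((d : ℝ) + 1) / d) ∂(μ.prod volume)) ^ ((d : ℝ) / ((d : ℝ) + 1))
      ≤ D ^ ((d : ℝ) / ((d : ℝ) + 1)) * ∫⁻ p, G p ∂(μ.prod volume) :=
  lintegral_prod_sobolev_of_slice_sobolev (by exact_mod_cast (by omega : 1 < d)) hm hGm
    hslice hftc
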